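/- Let σ, R > 0, let ν, q : ℝ^d → ℝ be smooth, let c ∈ ℝ. Suppose f∞, g∞ : ℝ^d → ℝ are C² with f∞(x) > 0 for all x, and both satisfy the eigenvalue equation (H f∞)(x) = (c/(σ²R)) f∞(x) and (H g∞)(x) = (c/(σ²R)) g∞(x) for all x, where (He)(x) := (V(x)/(σ²R)) e(x) − (σ²/2) Δe(x) and V(x) := q(x) + (R/2)|∇ν(x)|² − (σ²R/2)Δν(x). Then v∞(x) := −σ²R · ln(f∞(x)) − R ν(x) satisfies the stationary HJB equation q − c − |∇v∞|²/(2R) − ∇v∞·∇ν + (σ²/2)Δv∞ = 0 pointwise, and p∞(x) := f∞(x) g∞(x) satisfies the stationary Fokker–Planck equation ∇·((∇ν + ∇v∞/R) p∞) + (σ²/2) Δp∞ = 0 pointwise. -/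

import Mathlib

open MeasureTheory
open scoped BigOperators RealInnerProductSpace

/-- Divergence of a vector field on `ℝ^d`. -/
noncomputable def vdiv {d : ℕ} (X : EuclideanSpace ℝ (Fin d) → EuclideanSpace ℝ (Fin d))
    (x : EuclideanSpace ℝ (Fin d)) : ℝ :=
  ∑ i, fderiv ℝ X x (EuclideanSpace.single i 1) i

/-- Laplacian of a scalar field on `ℝ^d`, as the divergence of the gradient. -/
noncomputable def lap {d : ℕ} (f : EuclideanSpace ℝ (Fin d) → ℝ)
    (x : EuclideanSpace ℝ (Fin d)) : ℝ :=
  vdiv (gradient f) x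

section helpers

variable {d : ℕ}

local notation "E" => EuclideanSpace ℝ (Fin d)

lemma fderiv_apply_eq_inner_gradient (f : E → ℝ) (x v : E) :
    fderiv ℝ f x v = ⟪gradient f x, v⟫ := by
  rw [gradient, InnerProductSpace.toDual_symm_apply]

lemma gradient_apply (f : E → ℝ) (x : E) (i : Fin d) :
    gradient f x i = fderiv ℝ f x (EuclideanSpace.single i 1) := by
  rw [fderiv_apply_eq_inner_gradient, EuclideanSpace.inner_single_right]
  simp

lemma inner_eq_sum (a b : E) : ⟪a, b⟫ = ∑ i, a i * b i := by
  simp [PiLp.inner_apply, mul_comm]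

lemma vdiv_of_hasFDerivAt {X : E → E} {L : E →L[ℝ] E} {x : E} (h : HasFDerivAt X L x) :
    vdiv X x = ∑ i, L (EuclideanSpace.single i 1) i := by
  rw [vdiv, h.fderiv]

lemma vdiv_add {X Y : E → E} {x : E} (hX : DifferentiableAt ℝ X x)
    (hY : DifferentiableAt ℝ Y x) :
    vdiv (fun y => X y + Y y) x = vdiv X x + vdiv Y x := by
  rw [vdiv_of_hasFDerivAt (X := fun y => X y + Y y) (hX.hasFDerivAt.add hY.hasFDerivAt), vdiv, vdiv,
    ← Finset.sum_add_distrib]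
  simp

lemma vdiv_sub {X Y : E → E} {x : E} (hX : DifferentiableAt ℝ X x)
    (hY : DifferentiableAt ℝ Y x) :
    vdiv (fun y => X y - Y y) x = vdiv X x - vdiv Y x := by
  rw [vdiv_of_hasFDerivAt (X := fun y => X y - Y y) (hX.hasFDerivAt.sub hY.hasFDerivAt), vdiv, vdiv,
    ← Finset.sum_sub_distrib]
  simp

lemma vdiv_smul {φ : E → ℝ} {X : E → E} {x : E} (hφ : DifferentiableAt ℝ φ x)
    (hX : DifferentiableAt ℝ X x) :
    vdiv (fun y => φ y • X y) x = ⟪gradient φ x, X x⟫ + φ x * vdiv X x := by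
  rw [vdiv_of_hasFDerivAt (X := fun y => φ y • X y) (hφ.hasFDerivAt.smul hX.hasFDerivAt), vdiv,
    inner_eq_sum, Finset.mul_sum, ← Finset.sum_add_distrib]
  refine Finset.sum_congr rfl fun i _ => ?_
  simp [gradient_apply, mul_comm]
  ring

lemma vdiv_const_smul (c : ℝ) {X : E → E} {x : E} (hX : DifferentiableAt ℝ X x) :
    vdiv (fun y => c • X y) x = c * vdiv X x := by
  rw [vdiv_of_hasFDerivAt (X := fun y => c • X y) (hX.hasFDerivAt.const_smul c), vdiv, Finset.mul_sum]
  simp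

lemma gradient_const_mul (c : ℝ) {h : E → ℝ} {x : E} (hh : DifferentiableAt ℝ h x) :
    gradient (fun y => c * h y) x = c • gradient h x := by
  rw [gradient, gradient, (hh.hasFDerivAt.const_mul c).fderiv, LinearIsometryEquiv.map_smul]

lemma differentiable_gradient {f : E → ℝ} (hf : ContDiff ℝ 2 f) :
    Differentiable ℝ (gradient f) := by
  have h1 : ContDiff ℝ 1 (fderiv ℝ f) := hf.fderiv_right (le_refl 2)
  have : gradient f = fun y =>
      (InnerProductSpace.toDual ℝ E).symm (fderiv ℝ f y) := rfl
  rw [this]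
  exact ((InnerProductSpace.toDual ℝ E).symm.contDiff.comp h1).differentiable one_ne_zero

end helpers
/-- If `f∞ > 0` and `g∞` are both eigenfunctions of the Schrödinger operator
`H e = (V/(σ²R))e − (σ²/2)Δe` with eigenvalue `c/(σ²R)`, then `v∞ = −σ²R ln f∞ − Rν`
solves the stationary HJB equation and `p∞ = f∞·g∞` solves the stationary
Fokker–Planck equation. -/
theorem eigenfunctions_give_stationary_HJB_FP
    (d : ℕ) (σ R : ℝ) (hσ : 0 < σ) (hR : 0 < R)
    (ν q : EuclideanSpace ℝ (Fin d) → ℝ) (hν : ContDiff ℝ (⊤ : ℕ∞) ν) (hq : ContDiff ℝ (⊤ : ℕ∞) q)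
    (c : ℝ)
    (V : EuclideanSpace ℝ (Fin d) → ℝ)
    (hV : ∀ x, V x = q x + R / 2 * ‖gradient ν x‖ ^ 2 - σ ^ 2 * R / 2 * lap ν x)
    (finf ginf : EuclideanSpace ℝ (Fin d) → ℝ)
    (hfinf : ContDiff ℝ 2 finf) (hginf : ContDiff ℝ 2 ginf)
    (hfpos : ∀ x, 0 < finf x)
    (hfeig : ∀ x, V x / (σ ^ 2 * R) * finf x - σ ^ 2 / 2 * lap finf x
      = c / (σ ^ 2 * R) * finf x)
    (hgeig : ∀ x, V x / (σ ^ 2 * R) * ginf x - σ ^ 2 / 2 * lap ginf x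
      = c / (σ ^ 2 * R) * ginf x)
    (vinf pinf : EuclideanSpace ℝ (Fin d) → ℝ)
    (hv : ∀ x, vinf x = -(σ ^ 2 * R) * Real.log (finf x) - R * ν x)
    (hp : ∀ x, pinf x = finf x * ginf x) :
    (∀ x,
      q x - c - ‖gradient vinf x‖ ^ 2 / (2 * R)
        - ⟪gradient vinf x, gradient ν x⟫ + σ ^ 2 / 2 * lap vinf x = 0) ∧
    (∀ x,
      vdiv (fun y => pinf y • (gradient ν y + R⁻¹ • gradient vinf y)) x
        + σ ^ 2 / 2 * lap pinf x = 0) := by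
  have hσ2 : (σ : ℝ) ^ 2 ≠ 0 := pow_ne_zero 2 hσ.ne'
  have hRne : R ≠ 0 := hR.ne'
  have hfd : Differentiable ℝ finf := hfinf.differentiable two_ne_zero
  have hgd : Differentiable ℝ ginf := hginf.differentiable two_ne_zero
  have hνd : Differentiable ℝ ν := hν.differentiable (by simp)
  have hGf : Differentiable ℝ (gradient finf) := differentiable_gradient hfinf
  have hGg : Differentiable ℝ (gradient ginf) := differentiable_gradient hginf
  have hGν : Differentiable ℝ (gradient ν) := differentiable_gradient (hν.of_le (WithTop.coe_le_coe.mpr (le_top : (2:ℕ∞) ≤ ⊤)))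
  have hφd : Differentiable ℝ (fun z => -(σ ^ 2 * R) * (finf z)⁻¹) :=
    (hfd.inv fun y => (hfpos y).ne').const_mul _
  -- gradient of vinf
  have hgradv : ∀ y, gradient vinf y
      = (-(σ ^ 2 * R) * (finf y)⁻¹) • gradient finf y - R • gradient ν y := by
    intro y
    have hvfun : vinf = fun z => -(σ ^ 2 * R) * Real.log (finf z) - R * ν z := funext hv
    have h1 : HasFDerivAt vinf
        ((-(σ ^ 2 * R)) • ((finf y)⁻¹ • fderiv ℝ finf y) - R • fderiv ℝ ν y) y := by
      rw [hvfun]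
      exact (((hfd y).hasFDerivAt.log (hfpos y).ne').const_mul (-(σ ^ 2 * R))).sub
        ((hνd y).hasFDerivAt.const_mul R)
    rw [gradient, h1.fderiv, LinearIsometryEquiv.map_sub, LinearIsometryEquiv.map_smul,
      LinearIsometryEquiv.map_smul, LinearIsometryEquiv.map_smul, smul_smul]
    rfl
  -- gradient of the scalar factor
  have hgradφ : ∀ y, gradient (fun z => -(σ ^ 2 * R) * (finf z)⁻¹) y
      = ((σ ^ 2 * R) * ((finf y) ^ 2)⁻¹) • gradient finf y := by
    intro y
    have h0 : HasFDerivAt (fun z => (finf z)⁻¹)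
        ((-((finf y) ^ 2)⁻¹) • fderiv ℝ finf y) y :=
      (hasDerivAt_inv (hfpos y).ne').comp_hasFDerivAt y (hfd y).hasFDerivAt
    have h1 : HasFDerivAt (fun z => -(σ ^ 2 * R) * (finf z)⁻¹)
        ((-(σ ^ 2 * R)) • ((-((finf y) ^ 2)⁻¹) • fderiv ℝ finf y)) y :=
      h0.const_mul _
    rw [gradient, h1.fderiv, LinearIsometryEquiv.map_smul, LinearIsometryEquiv.map_smul,
      smul_smul]
    show (-(σ ^ 2 * R) * -((finf y) ^ 2)⁻¹) • gradient finf y = _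
    congr 1
    ring
  -- laplacian of vinf
  have hlapv : ∀ x, lap vinf x
      = (σ ^ 2 * R) * ((finf x) ^ 2)⁻¹ * ‖gradient finf x‖ ^ 2
        + (-(σ ^ 2 * R) * (finf x)⁻¹) * lap finf x - R * lap ν x := by
    intro x
    have hgv : gradient vinf = fun y =>
        (fun z => -(σ ^ 2 * R) * (finf z)⁻¹) y • gradient finf y - R • gradient ν y :=
      funext hgradv
    rw [lap, hgv, vdiv_sub (X := fun y => (fun z => -(σ ^ 2 * R) * (finf z)⁻¹) y • gradient finf y)
        (Y := fun y => R • gradient ν y) ((hφd x).smul (hGf x)) ((hGν x).const_smul R),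
      vdiv_smul (hφd x) (hGf x), vdiv_const_smul R (hGν x), hgradφ x,
      real_inner_smul_left, real_inner_self_eq_norm_sq, lap, lap]
  -- key scalar identities from the eigenvalue equations
  have keyf : ∀ x, σ ^ 2 / 2 * lap finf x = (V x - c) / (σ ^ 2 * R) * finf x := by
    intro x
    linear_combination (-1 : ℝ) * hfeig x
  have keyg : ∀ x, σ ^ 2 / 2 * lap ginf x = (V x - c) / (σ ^ 2 * R) * ginf x := by
    intro x
    linear_combination (-1 : ℝ) * hgeig x
  -- gradient of pinf
  have hgradp : ∀ y, gradient pinf y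
      = finf y • gradient ginf y + ginf y • gradient finf y := by
    intro y
    have hpfun : pinf = fun z => finf z * ginf z := funext hp
    have h1 : HasFDerivAt pinf (finf y • fderiv ℝ ginf y + ginf y • fderiv ℝ finf y) y := by
      rw [hpfun]
      exact (hfd y).hasFDerivAt.mul (hgd y).hasFDerivAt
    rw [gradient, h1.fderiv, LinearIsometryEquiv.map_add, LinearIsometryEquiv.map_smul,
      LinearIsometryEquiv.map_smul]
    rfl
  constructor
  · -- HJB
    intro x
    have hfx : finf x ≠ 0 := (hfpos x).ne'
    have kf := keyf x
    rw [hV x] at kf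
    rw [hgradv x, hlapv x, ← real_inner_self_eq_norm_sq]
    simp only [inner_sub_left, inner_sub_right, real_inner_smul_left, real_inner_smul_right]
    rw [real_inner_comm (gradient ν x) (gradient finf x),
      real_inner_self_eq_norm_sq, real_inner_self_eq_norm_sq]
    field_simp at kf ⊢
    linear_combination (-(finf x)) * kf
  · -- Fokker-Planck
    intro x
    have hZ : (fun y => pinf y • (gradient ν y + R⁻¹ • gradient vinf y))
        = fun y => (-σ ^ 2 * ginf y) • gradient finf y := by
      funext y
      rw [hp y, hgradv y]
      have hf0 : finf y ≠ 0 := (hfpos y).ne'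
      match_scalars <;> field_simp <;> ring
    have hlapp : lap pinf x
        = (⟪gradient ginf x, gradient finf x⟫ + finf x * vdiv (gradient ginf) x)
          + (⟪gradient ginf x, gradient finf x⟫ + ginf x * vdiv (gradient finf) x) := by
      rw [lap, funext hgradp, vdiv_add (X := fun y => finf y • gradient ginf y)
        (Y := fun y => ginf y • gradient finf y) ((hfd x).smul (hGg x)) ((hgd x).smul (hGf x)),
        vdiv_smul (hfd x) (hGg x), vdiv_smul (hgd x) (hGf x),
        real_inner_comm (gradient finf x) (gradient ginf x)]
    rw [hZ, vdiv_smul ((hgd x).const_mul (-σ ^ 2)) (hGf x),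
      gradient_const_mul (-σ ^ 2) (hgd x), real_inner_smul_left, hlapp]
    have kf2 := keyf x
    have kg2 := keyg x
    simp only [lap] at kf2 kg2
    linear_combination (finf x) * kg2 - (ginf x) * kf2
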